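/- arXiv:1011.5696 — 3 statements merged into one kernel-verified Lean document; each statement's English description precedes it below -/
import Mathlib

section
/- Let M : Matrix (Fin m) (Fin n) ℝ and let u : Fin n → ℝ and v : Fin m → ℝ be nonzero vectors. Then the pair of lines (ℝ ∙ u, ℝ ∙ v) is a concept with respect to M — i.e. Submodule.map M.mulVecLin (ℝ ∙ u) = ℝ ∙ v and Submodule.map Mᵀ.mulVecLin (ℝ ∙ v) = ℝ ∙ u — if and only if there exists μ ≠ 0 such that (Mᵀ * M).mulVec u = μ • u and ℝ ∙ (M.mulVec u) = ℝ ∙ v. In other words, concepts with respect to M are exactly the pairs (line of an eigenvector u of MᵀM with nonzero eigenvalue, image line of u under M). -/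
open Matrix

lemma map_span_single {k l : ℕ} (A : Matrix (Fin k) (Fin l) ℝ) (x : Fin l → ℝ) :
    Submodule.map A.mulVecLin (ℝ ∙ x) = ℝ ∙ (A.mulVec x) := by
  rw [Submodule.map_span, Set.image_singleton, Matrix.mulVecLin_apply]

lemma span_eq_iff {k : ℕ} {x y : Fin k → ℝ} (hy : y ≠ 0) (h : (ℝ ∙ x) = ℝ ∙ y) :
    ∃ c : ℝ, c ≠ 0 ∧ x = c • y := by
  have hx : x ∈ (ℝ ∙ y : Submodule ℝ (Fin k → ℝ)) := h ▸ Submodule.mem_span_singleton_self x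
  obtain ⟨c, hc⟩ := Submodule.mem_span_singleton.mp hx
  refine ⟨c, ?_, hc.symm⟩
  rintro rfl
  simp at hc
  subst hc
  have : y ∈ (ℝ ∙ (0 : Fin k → ℝ) : Submodule ℝ (Fin k → ℝ)) :=
    h ▸ Submodule.mem_span_singleton_self y
  rw [Submodule.span_zero_singleton] at this
  exact hy (by simpa using this)

/-- A pair of lines `(ℝ ∙ u, ℝ ∙ v)` is a concept with respect to `M` iff `u` is an
eigenvector of `MᵀM` with nonzero eigenvalue and `ℝ ∙ (M u) = ℝ ∙ v`. -/
theorem concept_iff_eigenvector {m n : ℕ} (M : Matrix (Fin m) (Fin n) ℝ)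
    (u : Fin n → ℝ) (v : Fin m → ℝ) (hu : u ≠ 0) (hv : v ≠ 0) :
    (Submodule.map M.mulVecLin (ℝ ∙ u) = (ℝ ∙ v) ∧
      Submodule.map Mᵀ.mulVecLin (ℝ ∙ v) = (ℝ ∙ u)) ↔
    (∃ μ : ℝ, μ ≠ 0 ∧ (Mᵀ * M).mulVec u = μ • u ∧
      (ℝ ∙ (M.mulVec u) : Submodule ℝ (Fin m → ℝ)) = ℝ ∙ v) := by
  rw [map_span_single, map_span_single]
  have key : ∀ hspan : (ℝ ∙ (M.mulVec u) : Submodule ℝ (Fin m → ℝ)) = ℝ ∙ v,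
      M.mulVec u ≠ 0 := by
    intro hspan h0
    rw [h0, Submodule.span_zero_singleton] at hspan
    have : v ∈ (⊥ : Submodule ℝ (Fin m → ℝ)) :=
      hspan ▸ Submodule.mem_span_singleton_self v
    exact hv (by simpa using this)
  constructor
  · rintro ⟨h1, h2⟩
    obtain ⟨a, ha, hva⟩ := span_eq_iff (key h1) h1.symm
    -- v = a • M u
    have hMv : Mᵀ.mulVec v = a • (Mᵀ * M).mulVec u := by
      rw [hva, Matrix.mulVec_smul, ← Matrix.mulVec_mulVec]
    obtain ⟨c, hc, hMvc⟩ := span_eq_iff hu h2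
    refine ⟨c / a, div_ne_zero hc ha, ?_, h1⟩
    have : a • (Mᵀ * M).mulVec u = c • u := by rw [← hMv, hMvc]
    have := congrArg (fun w => a⁻¹ • w) this
    simpa [smul_smul, inv_mul_cancel₀ ha, div_eq_inv_mul] using this
  · rintro ⟨μ, hμ, heig, hspan⟩
    refine ⟨hspan, ?_⟩
    obtain ⟨c, hc, hvc⟩ := span_eq_iff (key hspan) hspan.symm
    have : Mᵀ.mulVec v = (c * μ) • u := by
      rw [hvc, Matrix.mulVec_smul, Matrix.mulVec_mulVec, heig, smul_smul]
    rw [this]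
    exact Submodule.span_singleton_smul_eq (isUnit_iff_ne_zero.mpr (mul_ne_zero hc hμ)) u
end

section
/- Let M = V * Matrix.diagonal λ * Uᵀ where U : Matrix (Fin n) (Fin k) ℝ and V : Matrix (Fin m) (Fin k) ℝ have orthonormal columns (Uᵀ * U = 1 and Vᵀ * V = 1) and λ : Fin k → ℝ. Write uᵢ := (fun a => U a i) and vᵢ := (fun b => V b i) for the i-th columns. Then for every i : Fin k, M.mulVec uᵢ = λ i • vᵢ and Mᵀ.mulVec vᵢ = λ i • uᵢ; moreover, if λ i ≠ 0, then the pair (ℝ ∙ uᵢ, ℝ ∙ vᵢ) is a concept with respect to M, i.e. Submodule.map M.mulVecLin (ℝ ∙ uᵢ) = ℝ ∙ vᵢ and Submodule.map Mᵀ.mulVecLin (ℝ ∙ vᵢ) = ℝ ∙ uᵢ. -/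
open Matrix

lemma col_eq_mulVec_single {m k : ℕ} (A : Matrix (Fin m) (Fin k) ℝ) (i : Fin k) :
    (fun a => A a i) = A.mulVec (Pi.single i 1) := by
  ext a; simp

/-- The columns of `U` and `V` in a singular value decomposition `M = V Λ Uᵀ`, paired by a
nonzero singular value, generate concepts with respect to `M`. -/
theorem svd_columns_are_concepts {m n k : ℕ}
    (U : Matrix (Fin n) (Fin k) ℝ) (V : Matrix (Fin m) (Fin k) ℝ) (lam : Fin k → ℝ)
    (hU : Uᵀ * U = 1) (hV : Vᵀ * V = 1)
    (M : Matrix (Fin m) (Fin n) ℝ) (hM : M = V * Matrix.diagonal lam * Uᵀ) (i : Fin k) :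
    M.mulVec (fun a => U a i) = lam i • (fun b => V b i) ∧
    Mᵀ.mulVec (fun b => V b i) = lam i • (fun a => U a i) ∧
    (lam i ≠ 0 →
      Submodule.map M.mulVecLin (ℝ ∙ (fun a => U a i)) = (ℝ ∙ (fun b => V b i)) ∧
      Submodule.map Mᵀ.mulVecLin (ℝ ∙ (fun b => V b i)) = ℝ ∙ (fun a => U a i)) := by
  have hdiag : Matrix.diagonal lam *ᵥ Pi.single i 1 = lam i • (Pi.single i 1 : Fin k → ℝ) := by
    rw [diagonal_mulVec_single]
    ext j
    rcases eq_or_ne j i with rfl | hj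
    · simp
    · simp [Pi.single_eq_of_ne hj]
  have h1 : M.mulVec (fun a => U a i) = lam i • (fun b => V b i) := by
    rw [col_eq_mulVec_single, col_eq_mulVec_single, hM, ← mulVec_mulVec, ← mulVec_mulVec,
      mulVec_mulVec _ Uᵀ U, hU, one_mulVec, hdiag, mulVec_smul]
  have h2 : Mᵀ.mulVec (fun b => V b i) = lam i • (fun a => U a i) := by
    have hMt : Mᵀ = U * Matrix.diagonal lam * Vᵀ := by
      rw [hM]; simp [Matrix.transpose_mul, Matrix.diagonal_transpose, Matrix.mul_assoc]
    rw [col_eq_mulVec_single, col_eq_mulVec_single, hMt, ← mulVec_mulVec, ← mulVec_mulVec,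
      mulVec_mulVec _ Vᵀ V, hV, one_mulVec, hdiag, mulVec_smul]
  refine ⟨h1, h2, fun hne => ?_⟩
  have hmap : ∀ (p q : ℕ) (A : Matrix (Fin p) (Fin q) ℝ) (u : Fin q → ℝ) (v : Fin p → ℝ),
      A.mulVec u = lam i • v → Submodule.map A.mulVecLin (ℝ ∙ u) = ℝ ∙ v := by
    intro p q A u v h
    rw [Submodule.map_span, Set.image_singleton, Matrix.mulVecLin_apply, h,
      Submodule.span_singleton_smul_eq (IsUnit.mk0 _ hne)]
  exact ⟨hmap _ _ M _ _ h1, hmap _ _ Mᵀ _ _ h2⟩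
end

section
/- Let M : Matrix (Fin m) (Fin n) ℝ admit two singular value decompositions M = V₁ * Matrix.diagonal λ₁ * U₁ᵀ = V₂ * Matrix.diagonal λ₂ * U₂ᵀ, where for each i ∈ {1,2}: Uᵢ : Matrix (Fin n) (Fin n) ℝ is orthogonal (Uᵢᵀ * Uᵢ = 1 and Uᵢ * Uᵢᵀ = 1), Vᵢ : Matrix (Fin m) (Fin n) ℝ satisfies Vᵢᵀ * Vᵢ = 1, and all entries of λᵢ are strictly positive. Then V₁ * U₁ᵀ = V₂ * U₂ᵀ. That is, the similarity-preserving operator F_M = V Uᵀ induced by an injective M is uniquely determined by M, independently of the choice of singular value decomposition. -/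
/-!
For an SVD `M = V * diagonal d * Uᵀ` with `d ≥ 0`, the matrix `|M| = U * diagonal d * Uᵀ` is
positive semidefinite with `|M| ^ 2 = Mᵀ * M`, so by uniqueness of positive square roots it does
not depend on the decomposition. Since `V * Uᵀ * |M| = M` and `|M|` is invertible when `d > 0`,
`V * Uᵀ = M * |M|⁻¹` is determined by `M` as well.
-/

open Matrix

namespace Matrix

section CommSemiring

variable {m n R : Type*} [Fintype n] [DecidableEq n] [CommSemiring R]

theorem conj_diagonal_mul_conj_diagonal {U : Matrix n n R} (hU : Uᵀ * U = 1) (a b : n → R) :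
    U * diagonal a * Uᵀ * (U * diagonal b * Uᵀ) = U * diagonal (a * b) * Uᵀ := by
  calc U * diagonal a * Uᵀ * (U * diagonal b * Uᵀ)
      = U * diagonal a * (Uᵀ * U) * diagonal b * Uᵀ := by simp only [Matrix.mul_assoc]
    _ = U * diagonal (a * b) * Uᵀ := by
      rw [hU, Matrix.mul_one, Matrix.mul_assoc U, diagonal_mul_diagonal]; rfl

theorem mul_transpose_mul_conj_diagonal {U : Matrix n n R} (hU : Uᵀ * U = 1) (V : Matrix m n R)
    (d : n → R) : V * Uᵀ * (U * diagonal d * Uᵀ) = V * diagonal d * Uᵀ := by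
  calc V * Uᵀ * (U * diagonal d * Uᵀ) = V * (Uᵀ * U) * diagonal d * Uᵀ := by
        simp only [Matrix.mul_assoc]
    _ = V * diagonal d * Uᵀ := by rw [hU, Matrix.mul_one]

theorem transpose_mul_self_svd [Fintype m] {V : Matrix m n R}
    (hV : Vᵀ * V = 1) (U : Matrix n n R) (d : n → R) :
    (V * diagonal d * Uᵀ)ᵀ * (V * diagonal d * Uᵀ) = U * diagonal (d * d) * Uᵀ := by
  calc (V * diagonal d * Uᵀ)ᵀ * (V * diagonal d * Uᵀ)
      = U * diagonal d * (Vᵀ * V) * diagonal d * Uᵀ := by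
        simp only [transpose_mul, transpose_transpose, diagonal_transpose, Matrix.mul_assoc]
    _ = U * diagonal (d * d) * Uᵀ := by
      rw [hV, Matrix.mul_one, Matrix.mul_assoc U, diagonal_mul_diagonal]; rfl

end CommSemiring

theorem conj_diagonal_mul_conj_diagonal_inv {n K : Type*} [Fintype n] [DecidableEq n] [Field K]
    {U : Matrix n n K} (hU : Uᵀ * U = 1) {d : n → K} (hd : ∀ i, d i ≠ 0) :
    U * diagonal d * Uᵀ * (U * diagonal d⁻¹ * Uᵀ) = 1 := by
  have hdd : d * d⁻¹ = fun _ => 1 := funext fun i => mul_inv_cancel₀ (hd i)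
  rw [conj_diagonal_mul_conj_diagonal hU, hdd, diagonal_one, Matrix.mul_one, mul_eq_one_comm.mp hU]

variable {m n : Type*} [Fintype n] [DecidableEq n]

theorem posSemidef_conj_diagonal (U : Matrix n n ℝ) {d : n → ℝ} (hd : ∀ i, 0 ≤ d i) :
    (U * diagonal d * Uᵀ).PosSemidef :=
  (posSemidef_diagonal_iff.mpr hd).mul_mul_conjTranspose_same U

open scoped MatrixOrder in
theorem conj_diagonal_eq_of_svd_eq [Fintype m] {U₁ U₂ : Matrix n n ℝ} {V₁ V₂ : Matrix m n ℝ}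
    {d₁ d₂ : n → ℝ} (hU₁ : U₁ᵀ * U₁ = 1) (hV₁ : V₁ᵀ * V₁ = 1) (hd₁ : ∀ i, 0 ≤ d₁ i)
    (hU₂ : U₂ᵀ * U₂ = 1) (hV₂ : V₂ᵀ * V₂ = 1) (hd₂ : ∀ i, 0 ≤ d₂ i)
    (h : V₁ * diagonal d₁ * U₁ᵀ = V₂ * diagonal d₂ * U₂ᵀ) :
    U₁ * diagonal d₁ * U₁ᵀ = U₂ * diagonal d₂ * U₂ᵀ := by
  refine (CFC.sq_eq_sq_iff _ _ (posSemidef_conj_diagonal U₁ hd₁).nonneg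
    (posSemidef_conj_diagonal U₂ hd₂).nonneg).mp ?_
  rw [sq, sq, conj_diagonal_mul_conj_diagonal hU₁, conj_diagonal_mul_conj_diagonal hU₂,
    ← transpose_mul_self_svd hV₁, ← transpose_mul_self_svd hV₂, h]

end Matrix

theorem simPreserving_operator_unique_general {m n : ℕ} (M : Matrix (Fin m) (Fin n) ℝ)
    (U₁ U₂ : Matrix (Fin n) (Fin n) ℝ) (V₁ V₂ : Matrix (Fin m) (Fin n) ℝ)
    (lam₁ lam₂ : Fin n → ℝ)
    (hU₁ : U₁ᵀ * U₁ = 1) (hV₁ : V₁ᵀ * V₁ = 1)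
    (hlam₁ : ∀ i, 0 < lam₁ i)
    (hU₂ : U₂ᵀ * U₂ = 1) (hV₂ : V₂ᵀ * V₂ = 1)
    (hlam₂ : ∀ i, 0 < lam₂ i)
    (hM₁ : M = V₁ * Matrix.diagonal lam₁ * U₁ᵀ)
    (hM₂ : M = V₂ * Matrix.diagonal lam₂ * U₂ᵀ) :
    V₁ * U₁ᵀ = V₂ * U₂ᵀ := by
  have hA : U₁ * diagonal lam₁ * U₁ᵀ = U₂ * diagonal lam₂ * U₂ᵀ :=
    conj_diagonal_eq_of_svd_eq hU₁ hV₁ (fun i => (hlam₁ i).le) hU₂ hV₂ (fun i => (hlam₂ i).le)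
      (hM₁.symm.trans hM₂)
  let _ : Invertible (U₁ * diagonal lam₁ * U₁ᵀ) := invertibleOfRightInverse _ _
    (conj_diagonal_mul_conj_diagonal_inv hU₁ fun i => (hlam₁ i).ne')
  rw [← Matrix.mul_left_inj_of_invertible (U₁ * diagonal lam₁ * U₁ᵀ),
    mul_transpose_mul_conj_diagonal hU₁, hA, mul_transpose_mul_conj_diagonal hU₂, ← hM₁, ← hM₂]

/-- The similarity-preserving operator `F_M = V Uᵀ` induced by an injective `M` (all singular
values strictly positive) is uniquely determined by `M`, independently of the choice of
singular value decomposition. -/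
theorem simPreserving_operator_unique {m n : ℕ} (M : Matrix (Fin m) (Fin n) ℝ)
    (U₁ U₂ : Matrix (Fin n) (Fin n) ℝ) (V₁ V₂ : Matrix (Fin m) (Fin n) ℝ)
    (lam₁ lam₂ : Fin n → ℝ)
    (hU₁ : U₁ᵀ * U₁ = 1) (hU₁' : U₁ * U₁ᵀ = 1) (hV₁ : V₁ᵀ * V₁ = 1)
    (hlam₁ : ∀ i, 0 < lam₁ i)
    (hU₂ : U₂ᵀ * U₂ = 1) (hU₂' : U₂ * U₂ᵀ = 1) (hV₂ : V₂ᵀ * V₂ = 1)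
    (hlam₂ : ∀ i, 0 < lam₂ i)
    (hM₁ : M = V₁ * Matrix.diagonal lam₁ * U₁ᵀ)
    (hM₂ : M = V₂ * Matrix.diagonal lam₂ * U₂ᵀ) :
    V₁ * U₁ᵀ = V₂ * U₂ᵀ :=
  simPreserving_operator_unique_general M U₁ U₂ V₁ V₂ lam₁ lam₂ hU₁ hV₁ hlam₁ hU₂ hV₂ hlam₂ hM₁ hM₂
end
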